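/- For b ≥ 1 and n ≥ 2, α_{n-2,n}^{(b)} = ((n+1)/6) * (((3n+4)/4) * b + 1) * b * (b-1)^2, where α_{k,n}^{(b)} := [u^{n-k}] (u/h_b(u))^{n+1} and h_b(u) = ∑_{j=1}^{b} ((-1)^{j-1}/b) binom(b,j) binom(b,j-1) u^j. -/

import Mathlib

open PowerSeries

/-- The power series `h_b(u)/u = ∑_{i=0}^{b-1} ((-1)^i/b) binom(b,i+1) binom(b,i) u^i`,
where `h_b(u) = ∑_{j=1}^{b} ((-1)^{j-1}/b) binom(b,j) binom(b,j-1) u^j`. For `b ≥ 1` it has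
constant term `1`, so that `u/h_b(u) = (hDivU b)⁻¹` is a well-defined formal power series. -/
noncomputable def hDivU (b : ℕ) : PowerSeries ℚ :=
  ∑ i ∈ Finset.range b,
    PowerSeries.C ((-1 : ℚ) ^ i / b * (Nat.choose b (i + 1)) * (Nat.choose b i)) *
      PowerSeries.X ^ i

/-- Coefficient extraction `[u^d] F` for an integer index `d`, with the convention that
`[u^d] F = 0` for `d < 0`. -/
noncomputable def coeffZ (d : ℤ) (F : PowerSeries ℚ) : ℚ :=
  if 0 ≤ d then PowerSeries.coeff d.toNat F else 0

/-- `α_{k,n}^{(b)} = [u^{n-k}] (u/h_b(u))^{n+1}`. -/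
noncomputable def alphaC (b k n : ℕ) : ℚ :=
  coeffZ ((n : ℤ) - (k : ℤ)) ((hDivU b)⁻¹ ^ (n + 1))

/-! Only the coefficients of `u⁰, u¹, u²` of `h_b(u)/u` matter: for a series `F` with constant
term `1`, `[u²] F⁻¹ ^ N` is a polynomial in `[u¹] F` and `[u²] F`, and these two coefficients
are `-binom(b,2)` and `binom(b,3) binom(b,2) / b`. -/

namespace PowerSeries

section ConstantCoeffEqOne

variable {R : Type*} [CommSemiring R] {F : R⟦X⟧}

theorem coeff_one_pow_of_constantCoeff_eq_one (hF : constantCoeff F = 1) (N : ℕ) :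
    coeff 1 (F ^ N) = N * coeff 1 F := by
  induction N with
  | zero => simp
  | succ N ih =>
    rw [pow_succ, coeff_mul, Finset.Nat.sum_antidiagonal_eq_sum_range_succ_mk]
    simp [Finset.sum_range_succ, ih, coeff_zero_eq_constantCoeff, hF, map_pow]
    ring

theorem coeff_two_pow_of_constantCoeff_eq_one (hF : constantCoeff F = 1) (N : ℕ) :
    coeff 2 (F ^ N) = N * coeff 2 F + N.choose 2 * coeff 1 F ^ 2 := by
  induction N with
  | zero => simp
  | succ N ih =>
    rw [pow_succ, coeff_mul, Finset.Nat.sum_antidiagonal_eq_sum_range_succ_mk]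
    simp [Finset.sum_range_succ, ih, coeff_one_pow_of_constantCoeff_eq_one hF,
      coeff_zero_eq_constantCoeff, hF, map_pow, Nat.choose_succ_succ]
    ring

end ConstantCoeffEqOne

section Inverse

variable {k : Type*} [Field k] {F : k⟦X⟧}

theorem constantCoeff_inv_of_constantCoeff_eq_one (hF : constantCoeff F = 1) :
    constantCoeff F⁻¹ = 1 := by
  rw [constantCoeff_inv, hF, inv_one]

theorem coeff_one_inv_of_constantCoeff_eq_one (hF : constantCoeff F = 1) :
    coeff 1 F⁻¹ = -coeff 1 F := by
  have h := congrArg (coeff 1) (PowerSeries.mul_inv_cancel F (by simp [hF]))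
  rw [coeff_mul, Finset.Nat.sum_antidiagonal_eq_sum_range_succ_mk] at h
  simp [Finset.sum_range_succ, coeff_zero_eq_constantCoeff, hF,
    constantCoeff_inv_of_constantCoeff_eq_one hF] at h
  linear_combination h

theorem coeff_two_inv_of_constantCoeff_eq_one (hF : constantCoeff F = 1) :
    coeff 2 F⁻¹ = coeff 1 F ^ 2 - coeff 2 F := by
  have h := congrArg (coeff 2) (PowerSeries.mul_inv_cancel F (by simp [hF]))
  rw [coeff_mul, Finset.Nat.sum_antidiagonal_eq_sum_range_succ_mk] at h
  simp [Finset.sum_range_succ, coeff_zero_eq_constantCoeff, hF,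
    constantCoeff_inv_of_constantCoeff_eq_one hF, coeff_one_inv_of_constantCoeff_eq_one hF] at h
  linear_combination h

end Inverse

end PowerSeries

theorem coeff_hDivU (b i : ℕ) :
    coeff i (hDivU b) = (-1 : ℚ) ^ i / b * (b.choose (i + 1)) * (b.choose i) := by
  rw [hDivU, map_sum]
  simp only [coeff_C_mul, coeff_X_pow, mul_ite, mul_one, mul_zero, Finset.sum_ite_eq,
    Finset.mem_range]
  split_ifs with hi
  · rfl
  · simp [Nat.choose_eq_zero_of_lt (by omega : b < i + 1)]

theorem constantCoeff_hDivU {b : ℕ} (hb : b ≠ 0) : constantCoeff (hDivU b) = 1 := by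
  rw [← coeff_zero_eq_constantCoeff_apply, coeff_hDivU]
  simp [hb]

theorem Nat.cast_choose_three {K : Type*} [Field K] [CharZero K] (b : ℕ) :
    (b.choose 3 : K) = b * (b - 1) * (b - 2) / 6 := by
  induction b with
  | zero => simp
  | succ b ih =>
    rw [Nat.choose_succ_succ, Nat.cast_add, ih, Nat.cast_choose_two]
    push_cast
    ring

theorem coeff_one_hDivU {b : ℕ} (hb : b ≠ 0) : coeff 1 (hDivU b) = -(b * (b - 1) / 2) := by
  rw [coeff_hDivU, Nat.cast_choose_two, Nat.choose_one_right]
  field_simp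

theorem coeff_two_hDivU {b : ℕ} (hb : b ≠ 0) :
    coeff 2 (hDivU b) = b * (b - 1) ^ 2 * (b - 2) / 12 := by
  rw [coeff_hDivU, Nat.cast_choose_three, Nat.cast_choose_two]
  field_simp
  ring

theorem alphaC_sub_two (b : ℕ) {n : ℕ} (hn : 2 ≤ n) :
    alphaC b (n - 2) n = coeff 2 ((hDivU b)⁻¹ ^ (n + 1)) := by
  rw [alphaC, coeffZ, show (n : ℤ) - ((n - 2 : ℕ) : ℤ) = 2 by omega]
  rfl

theorem stmt12 (b n : ℕ) (hb : 1 ≤ b) (hn : 2 ≤ n) :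
    alphaC b (n - 2) n =
      ((n : ℚ) + 1) / 6 * ((3 * (n : ℚ) + 4) / 4 * b + 1) * b * ((b : ℚ) - 1) ^ 2 := by
  have hb0 : b ≠ 0 := by omega
  have h0 := constantCoeff_hDivU hb0
  rw [alphaC_sub_two b hn,
    coeff_two_pow_of_constantCoeff_eq_one (constantCoeff_inv_of_constantCoeff_eq_one h0),
    coeff_two_inv_of_constantCoeff_eq_one h0, coeff_one_inv_of_constantCoeff_eq_one h0,
    coeff_one_hDivU hb0, coeff_two_hDivU hb0, Nat.cast_choose_two]
  push_cast
  ring
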